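/- arXiv:math/0605411 — 4 statements merged into one kernel-verified Lean document; each statement's English description precedes it below -/
import Mathlib

section
/- Every function in the clone C which takes a value in A is a projection; equivalently, if f ∈ C is not a projection, then the range of f is disjoint from A. -/
universe u v

/-- A clone on `X`: a set of finitary operations (of each arity `n + 1 ≥ 1`)
containing all projections and closed under composition. -/
structure Clone (X : Type u) where
  carrier : ∀ n : ℕ, Set ((Fin (n + 1) → X) → X)
  proj_mem : ∀ (n : ℕ) (i : Fin (n + 1)), (fun x => x i) ∈ carrier n
  comp_mem : ∀ {m n : ℕ} (f : (Fin (m + 1) → X) → X)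
      (g : Fin (m + 1) → (Fin (n + 1) → X) → X),
      f ∈ carrier m → (∀ i, g i ∈ carrier n) →
      (fun x => f fun i => g i x) ∈ carrier n

namespace Clone

variable {X : Type u}

theorem carrier_injective : Function.Injective (Clone.carrier (X := X)) := by
  rintro ⟨c, _, _⟩ ⟨d, _, _⟩ h
  simpa using h

instance : PartialOrder (Clone X) where
  le C D := ∀ n, C.carrier n ⊆ D.carrier n
  le_refl _ _ := subset_rfl
  le_trans _ _ _ h₁ h₂ n := (h₁ n).trans (h₂ n)
  le_antisymm _ _ h₁ h₂ :=
    carrier_injective (funext fun n => subset_antisymm (h₁ n) (h₂ n))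

instance : InfSet (Clone X) where
  sInf S :=
    { carrier := fun n => ⋂ C ∈ S, C.carrier n
      proj_mem := fun n i => Set.mem_iInter₂.2 fun C _ => C.proj_mem n i
      comp_mem := fun f g hf hg => Set.mem_iInter₂.2 fun C hC =>
        C.comp_mem f g (Set.mem_iInter₂.1 hf C hC)
          fun i => Set.mem_iInter₂.1 (hg i) C hC }

/-- The lattice `Cl(X)` of all clones on `X` is a complete lattice
(with infima given by intersection). -/
instance : CompleteLattice (Clone X) :=
  completeLatticeOfInf (Clone X) (fun S =>
    ⟨fun C hC n _ hx => Set.mem_iInter₂.1 hx C hC,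
     fun _ hD n _ hx => Set.mem_iInter₂.2 fun C hC => hD hC n hx⟩)

/-- The clone generated by a family `F` of operations:
the smallest clone whose carrier contains `F`. -/
def cloneGen (F : ∀ n : ℕ, Set ((Fin (n + 1) → X) → X)) : Clone X :=
  sInf {C : Clone X | ∀ n, F n ⊆ C.carrier n}

end Clone

attribute [local instance] Classical.propDecidable

noncomputable section Construction

variable {X : Type u} {P : Type v} [SemilatticeSup P]
variable (e0 e1 e2 e4 : X) (Af : P → Set X)

/-- `A = X ∖ {0, 1, 2, 4}`. -/
def Aset : Set X := ({e0, e1, e2, e4} : Set X)ᶜ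

/-- The unary function `φ_p`: the characteristic function of `A_p` on `A`,
fixing `2` and sending `{0, 1, 4}` to `4`. -/
def phi (p : P) (x : X) : X :=
  if x ∈ Af p then e1
  else if x ∈ Aset e0 e1 e2 e4 then e0
  else if x = e2 then e2
  else e4

/-- The ternary function `m_p^{q₁,q₂}`. -/
def mOp (p q1 q2 : P) (x y z : X) : X :=
  if y = phi e0 e1 e2 e4 Af q1 x ∧ z = phi e0 e1 e2 e4 Af q2 x then
    phi e0 e1 e2 e4 Af p x
  else if (x = e2 ∨ y = e2 ∨ z = e2) ∧ y ≠ e1 ∧ y ≠ e4 ∧ z ≠ e1 ∧ z ≠ e4 then e2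
  else e4

/-- `φ_p` as a unary operation (member of arity-1 part of a clone). -/
def phi1 (p : P) : (Fin 1 → X) → X := fun x => phi e0 e1 e2 e4 Af p (x 0)

/-- `m_p^{q₁,q₂}` as a ternary operation. -/
def m3 (p q1 q2 : P) : (Fin 3 → X) → X :=
  fun x => mOp e0 e1 e2 e4 Af p q1 q2 (x 0) (x 1) (x 2)

/-- The family `Φ_Q = {φ_p : p ∈ Q}`, as a family of operations indexed by arity. -/
def PhiFam (Q : Set P) : ∀ n : ℕ, Set ((Fin (n + 1) → X) → X)
  | 0 => {f | ∃ p ∈ Q, f = phi1 e0 e1 e2 e4 Af p}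
  | _ + 1 => ∅

/-- The family `M = {m_p^{q₁,q₂} : p ≤ q₁ ∨ q₂}`, as a family of operations indexed by arity. -/
def MFam : ∀ n : ℕ, Set ((Fin (n + 1) → X) → X)
  | 2 => {f | ∃ p q1 q2 : P, p ≤ q1 ⊔ q2 ∧ f = m3 e0 e1 e2 e4 Af p q1 q2}
  | _ => ∅

/-- The clone `C = ⟨Φ ∪ M⟩`. -/
def CClone : Clone X :=
  Clone.cloneGen fun n => PhiFam e0 e1 e2 e4 Af Set.univ n ∪ MFam e0 e1 e2 e4 Af n

/-- A function depends on its `i`-th variable iff it takes different values on two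
tuples differing only in the `i`-th coordinate. -/
def DependsOnVar {n : ℕ} (t : (Fin n → X) → X) (i : Fin n) : Prop :=
  ∃ a b : Fin n → X, (∀ j, j ≠ i → a j = b j) ∧ t a ≠ t b

/-- A unary function is distracted iff it takes a value in `{2, 4}` somewhere on `A`. -/
def Distracted (f : X → X) : Prop :=
  ∃ a ∈ Aset e0 e1 e2 e4, f a = e2 ∨ f a = e4

/-- The unary function `X → X` corresponding to a unary operation. -/
def toFun1 (u : (Fin 1 → X) → X) : X → X := fun a => u fun _ => a

/-- An `n`-ary member of `C` is unspoilt iff some substitution of unary members of `C`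
into it yields an element of `Φ`. -/
def Unspoilt {n : ℕ} (t : (Fin (n + 1) → X) → X) : Prop :=
  ∃ ts : Fin (n + 1) → (Fin 1 → X) → X,
    (∀ i, ts i ∈ (CClone e0 e1 e2 e4 Af).carrier 0) ∧
    (fun x : Fin 1 → X => t fun i => ts i x) ∈ PhiFam e0 e1 e2 e4 Af Set.univ 0

/-- The family `S` of all spoilt members of `C`. -/
def SpoiltFam (n : ℕ) : Set ((Fin (n + 1) → X) → X) :=
  {t | t ∈ (CClone e0 e1 e2 e4 Af).carrier n ∧ ¬ Unspoilt e0 e1 e2 e4 Af t}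

/-- The clone `C_I = ⟨Φ_I ∪ M ∪ S⟩`. -/
def CI (I : Set P) : Clone X :=
  Clone.cloneGen fun n =>
    PhiFam e0 e1 e2 e4 Af I n ∪ MFam e0 e1 e2 e4 Af n ∪ SpoiltFam e0 e1 e2 e4 Af n

end Construction

/-- An ideal of a join-semilattice: a downward closed subset closed under finite joins. -/
def IsIdealP {P : Type v} [SemilatticeSup P] (I : Set P) : Prop :=
  (∀ p q : P, p ≤ q → q ∈ I → p ∈ I) ∧ ∀ p q : P, p ∈ I → q ∈ I → p ⊔ q ∈ I

/-- The ideal of `P` generated by a subset `I`. -/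
def idealGen {P : Type v} [SemilatticeSup P] (I : Set P) : Set P :=
  ⋂₀ {J : Set P | IsIdealP J ∧ I ⊆ J}

/-!
The operations that are projections or never take a value in a fixed set `S` form a clone:
substituting into a projection returns one of the substituted operations, and substituting into
an operation avoiding `S` again avoids `S`. Every generator of `C` takes its values in
`{0, 1, 2, 4}`, so `C` lies inside this clone for `S = A`.
-/

namespace Clone

variable {X : Type u}

theorem cloneGen_le {F : ∀ n : ℕ, Set ((Fin (n + 1) → X) → X)} {C : Clone X}
    (hF : ∀ n, F n ⊆ C.carrier n) : cloneGen F ≤ C :=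
  sInf_le hF

def projOrAvoiding (S : Set X) : Clone X where
  carrier _ := {t | (∃ i, t = fun x => x i) ∨ ∀ x, t x ∉ S}
  proj_mem _ i := Or.inl ⟨i, rfl⟩
  comp_mem f g hf hg := by
    rcases hf with ⟨i, rfl⟩ | hf
    · exact hg i
    · exact Or.inr fun x => hf _

end Clone

section Construction

variable {X : Type u} {P : Type v} (e0 e1 e2 e4 : X) (Af : P → Set X)

theorem phi_notMem_Aset (p : P) (x : X) : phi e0 e1 e2 e4 Af p x ∉ Aset e0 e1 e2 e4 := by
  unfold phi
  split_ifs <;> simp [Aset]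

theorem mOp_notMem_Aset (p q1 q2 : P) (x y z : X) :
    mOp e0 e1 e2 e4 Af p q1 q2 x y z ∉ Aset e0 e1 e2 e4 := by
  unfold mOp
  split_ifs
  · exact phi_notMem_Aset e0 e1 e2 e4 Af p x
  all_goals simp [Aset]

theorem CClone_le_projOrAvoiding_Aset [SemilatticeSup P] :
    CClone e0 e1 e2 e4 Af ≤ Clone.projOrAvoiding (Aset e0 e1 e2 e4) := by
  refine Clone.cloneGen_le fun k f hf => Or.inr ?_
  rcases hf with hf | hf
  · match k, f, hf with
    | 0, _, ⟨p, _, rfl⟩ => exact fun x => phi_notMem_Aset e0 e1 e2 e4 Af p (x 0)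
  · match k, f, hf with
    | 2, _, ⟨p, q1, q2, _, rfl⟩ =>
      exact fun x => mOp_notMem_Aset e0 e1 e2 e4 Af p q1 q2 (x 0) (x 1) (x 2)

end Construction

theorem only_projections_take_values_in_A_general
    {X : Type u} {P : Type v} [SemilatticeSup P]
    (e0 e1 e2 e4 : X)
    (Af : P → Set X)
    (n : ℕ) (t : (Fin (n + 1) → X) → X)
    (ht : t ∈ (CClone e0 e1 e2 e4 Af).carrier n)
    (hval : ∃ x : Fin (n + 1) → X, t x ∈ Aset e0 e1 e2 e4) :
    ∃ i : Fin (n + 1), t = fun x => x i := by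
  obtain ⟨x, hx⟩ := hval
  exact (CClone_le_projOrAvoiding_Aset e0 e1 e2 e4 Af n ht).resolve_right fun h => h x hx

/-- Lemma 1: the only functions in `C` which take values in `A` are the projections. -/
theorem only_projections_take_values_in_A
    {X : Type u} {P : Type v} [Infinite X] [SemilatticeSup P]
    (e0 e1 e2 e4 : X)
    (hdist : e0 ≠ e1 ∧ e0 ≠ e2 ∧ e0 ≠ e4 ∧ e1 ≠ e2 ∧ e1 ≠ e4 ∧ e2 ≠ e4)
    (hcard : Cardinal.lift.{u} (Cardinal.mk P) ≤ Cardinal.lift.{v} (2 ^ Cardinal.mk X))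
    (Af : P → Set X) (hAf : ∀ p : P, Af p ⊆ Aset e0 e1 e2 e4)
    (hcover : ∀ (p : P) (k : ℕ) (q : Fin k → P),
      (∀ i, p ≠ q i) → ¬ Af p ⊆ ⋃ i, Af (q i))
    (n : ℕ) (t : (Fin (n + 1) → X) → X)
    (ht : t ∈ (CClone e0 e1 e2 e4 Af).carrier n)
    (hval : ∃ x : Fin (n + 1) → X, t x ∈ Aset e0 e1 e2 e4) :
    ∃ i : Fin (n + 1), t = fun x => x i :=
  only_projections_take_values_in_A_general e0 e1 e2 e4 Af n t ht hval
end

section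
/- Let m_p^{q_1,q_2} ∈ M and let t_1, t_2, t_3 ∈ Φ ∪ {id}, where id is the identity function on X. Then the unary function f = m_p^{q_1,q_2}(t_1,t_2,t_3) is distracted unless t_1 = id, t_2 = φ_{q_1}, and t_3 = φ_{q_2}; and in the latter case f = φ_p. -/
universe u v

attribute [local instance] Classical.propDecidable

/-!
If `f = m_p^{q₁,q₂}(t₁,t₂,t₃)` is not distracted, then at every `a ∈ A` the first case of
`m` must apply with `t₁ a ∈ A`: every other case, and `φ_p` outside `A`, give `2` or `4`.
No `φ_r` takes a value in `A`, so `t₁ = id`, and then `t₂`, `t₃` agree with `φ_{q₁}`, `φ_{q₂}`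
on `A`. Agreement on `A` gives `A_r ⊆ A_q`, which the covering condition (with one set)
allows only for `r = q`.
-/

section Composition

variable {X : Type*} {P : Type*} {e0 e1 e2 e4 : X} {Af : P → Set X}

theorem phi_not_mem_Aset (r : P) (x : X) :
    phi e0 e1 e2 e4 Af r x ∉ Aset e0 e1 e2 e4 := by
  unfold phi Aset
  split_ifs <;> simp

theorem phi_of_mem {r : P} {x : X} (hx : x ∈ Af r) : phi e0 e1 e2 e4 Af r x = e1 := by
  rw [phi, if_pos hx]

theorem phi_of_mem_Aset_of_not_mem {r : P} {x : X} (hA : x ∈ Aset e0 e1 e2 e4)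
    (hx : x ∉ Af r) : phi e0 e1 e2 e4 Af r x = e0 := by
  rw [phi, if_neg hx, if_pos hA]

theorem phi_eq_e2_or_e4 {r : P} {x : X} (hAf : Af r ⊆ Aset e0 e1 e2 e4)
    (hx : x ∉ Aset e0 e1 e2 e4) :
    phi e0 e1 e2 e4 Af r x = e2 ∨ phi e0 e1 e2 e4 Af r x = e4 := by
  rw [phi, if_neg fun h => hx (hAf h), if_neg hx]
  split_ifs <;> simp

theorem mOp_phi_phi (p q1 q2 : P) (x : X) :
    mOp e0 e1 e2 e4 Af p q1 q2 x (phi e0 e1 e2 e4 Af q1 x) (phi e0 e1 e2 e4 Af q2 x) =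
      phi e0 e1 e2 e4 Af p x := by
  rw [mOp, if_pos ⟨rfl, rfl⟩]

theorem mOp_eq_e2_or_e4_or {p : P} (q1 q2 : P) (hAf : Af p ⊆ Aset e0 e1 e2 e4) (x y z : X) :
    (mOp e0 e1 e2 e4 Af p q1 q2 x y z = e2 ∨ mOp e0 e1 e2 e4 Af p q1 q2 x y z = e4) ∨
      (x ∈ Aset e0 e1 e2 e4 ∧ y = phi e0 e1 e2 e4 Af q1 x ∧ z = phi e0 e1 e2 e4 Af q2 x) := by
  unfold mOp
  split_ifs with hphi
  · by_cases hx : x ∈ Aset e0 e1 e2 e4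
    · exact Or.inr ⟨hx, hphi⟩
    · exact Or.inl (phi_eq_e2_or_e4 hAf hx)
  · exact Or.inl (Or.inl rfl)
  · exact Or.inl (Or.inr rfl)

theorem eq_id_of_apply_mem_Aset {t : X → X} (ht : t = id ∨ ∃ r : P, t = phi e0 e1 e2 e4 Af r)
    {a : X} (ha : t a ∈ Aset e0 e1 e2 e4) : t = id := by
  obtain ht | ⟨r, rfl⟩ := ht
  · exact ht
  · exact absurd ha (phi_not_mem_Aset r a)

theorem subset_of_phi_eqOn_Aset (h01 : e0 ≠ e1) {r q : P} (hAf : Af r ⊆ Aset e0 e1 e2 e4)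
    (h : ∀ a ∈ Aset e0 e1 e2 e4, phi e0 e1 e2 e4 Af r a = phi e0 e1 e2 e4 Af q a) :
    Af r ⊆ Af q := by
  intro a ha
  by_contra haq
  have := h a (hAf ha)
  rw [phi_of_mem ha, phi_of_mem_Aset_of_not_mem (hAf ha) haq] at this
  exact h01 this.symm

theorem eq_phi_of_eqOn_Aset (h01 : e0 ≠ e1) (hAf : ∀ r, Af r ⊆ Aset e0 e1 e2 e4)
    {q : P} (hmin : ∀ r, Af r ⊆ Af q → r = q) (hA : (Aset e0 e1 e2 e4).Nonempty)
    {t : X → X} (ht : t = id ∨ ∃ r : P, t = phi e0 e1 e2 e4 Af r)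
    (h : ∀ a ∈ Aset e0 e1 e2 e4, t a = phi e0 e1 e2 e4 Af q a) : t = phi e0 e1 e2 e4 Af q := by
  obtain ⟨a, ha⟩ := hA
  obtain rfl | ⟨r, rfl⟩ := ht
  · exact absurd (by rw [← h a ha]; exact ha) (phi_not_mem_Aset q a)
  · rw [hmin r (subset_of_phi_eqOn_Aset h01 (hAf r) h)]

end Composition

section Antichain

variable {X : Type*} {P : Type*} {Af : P → Set X}
  (hcover : ∀ (p : P) (k : ℕ) (q : Fin k → P), (∀ i, p ≠ q i) → ¬ Af p ⊆ ⋃ i, Af (q i))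
include hcover

theorem nonempty_of_forall_not_subset_iUnion (r : P) : (Af r).Nonempty :=
  Set.nonempty_iff_ne_empty.2 fun h =>
    hcover r 0 Fin.elim0 (fun i => i.elim0) (by simp [h])

theorem eq_of_subset_of_forall_not_subset_iUnion {r q : P} (h : Af r ⊆ Af q) : r = q := by
  by_contra hrq
  exact hcover r 1 (fun _ => q) (fun _ => hrq) (by rwa [Set.iUnion_const])

end Antichain

theorem composition_with_m_general
    {X : Type u} {P : Type v}
    (e0 e1 e2 e4 : X)
    (hdist : e0 ≠ e1 ∧ e0 ≠ e2 ∧ e0 ≠ e4 ∧ e1 ≠ e2 ∧ e1 ≠ e4 ∧ e2 ≠ e4)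
    (Af : P → Set X) (hAf : ∀ p : P, Af p ⊆ Aset e0 e1 e2 e4)
    (hcover : ∀ (p : P) (k : ℕ) (q : Fin k → P),
      (∀ i, p ≠ q i) → ¬ Af p ⊆ ⋃ i, Af (q i))
    (p q1 q2 : P)
    (t1 t2 t3 : X → X)
    (h1 : t1 = id ∨ ∃ r : P, t1 = phi e0 e1 e2 e4 Af r)
    (h2 : t2 = id ∨ ∃ r : P, t2 = phi e0 e1 e2 e4 Af r)
    (h3 : t3 = id ∨ ∃ r : P, t3 = phi e0 e1 e2 e4 Af r)
    (f : X → X)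
    (hf : f = fun x => mOp e0 e1 e2 e4 Af p q1 q2 (t1 x) (t2 x) (t3 x)) :
    (¬ (t1 = id ∧ t2 = phi e0 e1 e2 e4 Af q1 ∧ t3 = phi e0 e1 e2 e4 Af q2) →
      Distracted e0 e1 e2 e4 f) ∧
    ((t1 = id ∧ t2 = phi e0 e1 e2 e4 Af q1 ∧ t3 = phi e0 e1 e2 e4 Af q2) →
      f = phi e0 e1 e2 e4 Af p) := by
  subst hf
  refine ⟨fun hnot => ?_, fun ⟨ht1, ht2, ht3⟩ => ?_⟩
  · by_contra hundistracted
    have hmatch : ∀ a ∈ Aset e0 e1 e2 e4, t1 a ∈ Aset e0 e1 e2 e4 ∧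
        t2 a = phi e0 e1 e2 e4 Af q1 (t1 a) ∧ t3 a = phi e0 e1 e2 e4 Af q2 (t1 a) :=
      fun a ha => (mOp_eq_e2_or_e4_or q1 q2 (hAf p) _ _ _).resolve_left
        fun h => hundistracted ⟨a, ha, h⟩
    obtain ⟨a0, ha0⟩ : (Aset e0 e1 e2 e4).Nonempty :=
      (nonempty_of_forall_not_subset_iUnion hcover p).mono (hAf p)
    obtain rfl := eq_id_of_apply_mem_Aset h1 (hmatch a0 ha0).1
    have hmin : ∀ q r, Af r ⊆ Af q → r = q :=
      fun _ _ => eq_of_subset_of_forall_not_subset_iUnion hcover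
    exact hnot ⟨rfl,
      eq_phi_of_eqOn_Aset hdist.1 hAf (hmin q1) ⟨a0, ha0⟩ h2 fun a ha => (hmatch a ha).2.1,
      eq_phi_of_eqOn_Aset hdist.1 hAf (hmin q2) ⟨a0, ha0⟩ h3 fun a ha => (hmatch a ha).2.2⟩
  · subst ht1 ht2 ht3
    exact funext (mOp_phi_phi p q1 q2)

/-- Lemma 3: for `t1, t2, t3 ∈ Φ ∪ {id}`, the composition `m_p^(q1,q2)(t1,t2,t3)` is
distracted unless `t1 = id`, `t2 = φ_(q1)` and `t3 = φ_(q2)`, in which case it equals `φ_p`. -/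
theorem composition_with_m
    {X : Type u} {P : Type v} [Infinite X] [SemilatticeSup P]
    (e0 e1 e2 e4 : X)
    (hdist : e0 ≠ e1 ∧ e0 ≠ e2 ∧ e0 ≠ e4 ∧ e1 ≠ e2 ∧ e1 ≠ e4 ∧ e2 ≠ e4)
    (hcard : Cardinal.lift.{u} (Cardinal.mk P) ≤ Cardinal.lift.{v} (2 ^ Cardinal.mk X))
    (Af : P → Set X) (hAf : ∀ p : P, Af p ⊆ Aset e0 e1 e2 e4)
    (hcover : ∀ (p : P) (k : ℕ) (q : Fin k → P),
      (∀ i, p ≠ q i) → ¬ Af p ⊆ ⋃ i, Af (q i))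
    (p q1 q2 : P) (hpq : p ≤ q1 ⊔ q2)
    (t1 t2 t3 : X → X)
    (h1 : t1 = id ∨ ∃ r : P, t1 = phi e0 e1 e2 e4 Af r)
    (h2 : t2 = id ∨ ∃ r : P, t2 = phi e0 e1 e2 e4 Af r)
    (h3 : t3 = id ∨ ∃ r : P, t3 = phi e0 e1 e2 e4 Af r)
    (f : X → X)
    (hf : f = fun x => mOp e0 e1 e2 e4 Af p q1 q2 (t1 x) (t2 x) (t3 x)) :
    (¬ (t1 = id ∧ t2 = phi e0 e1 e2 e4 Af q1 ∧ t3 = phi e0 e1 e2 e4 Af q2) →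
      Distracted e0 e1 e2 e4 f) ∧
    ((t1 = id ∧ t2 = phi e0 e1 e2 e4 Af q1 ∧ t3 = phi e0 e1 e2 e4 Af q2) →
      f = phi e0 e1 e2 e4 Af p) :=
  composition_with_m_general e0 e1 e2 e4 hdist Af hAf hcover p q1 q2 t1 t2 t3 h1 h2 h3 f hf
end

section
/- Let t ∈ C be n-ary and unspoilt, and assume t depends on its first variable. Then t(2, x_2, …, x_n) ∈ {2,4} for all x_2, …, x_n ∈ X. -/
universe u v

attribute [local instance] Classical.propDecidable

/-! For `S = {2, 4}`, the operations `t` with `t x ∈ S` whenever some essential variable of `t`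
takes its value in `S` form a clone: an essential variable of a composite is an essential variable
of an inner operation that feeds an essential variable of the outer one. Since `φ_q x ∈ S` exactly
when `x ∉ A`, both `φ_p` and `m_p^{q₁,q₂}` send every tuple with an entry in `S` into `S`, so all
generators of `C`, hence all of `C`, lie in this clone. -/

section Absorbing

variable {X : Type u}

lemma exists_dependsOnVar_of_ne {n : ℕ} (f : (Fin n → X) → X) {u v : Fin n → X}
    (h : f u ≠ f v) : ∃ i, u i ≠ v i ∧ DependsOnVar f i := by
  by_contra! hind
  -- walk from `u` to `v` changing one coordinate at a time
  let w : ℕ → Fin n → X := fun k i => if (i : ℕ) < k then v i else u i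
  have hagree : ∀ k (j : Fin n), (j : ℕ) ≠ k → w k j = w (k + 1) j := by
    intro k j hj
    simp only [w]
    split_ifs <;> first | rfl | omega
  have hstep : ∀ k, f (w k) = f (w (k + 1)) := by
    intro k
    by_cases hk : k < n
    · by_cases huv : u ⟨k, hk⟩ = v ⟨k, hk⟩
      · congr 1
        funext j
        by_cases hj : (j : ℕ) = k
        · obtain rfl : j = ⟨k, hk⟩ := Fin.ext hj
          simpa [w] using huv
        · exact hagree k j hj
      · by_contra hne
        exact hind ⟨k, hk⟩ huv
          ⟨w k, w (k + 1), fun j hj => hagree k j fun h => hj (Fin.ext h), hne⟩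
    · exact congrArg f (funext fun j => hagree k j (by omega))
  have hchain : ∀ k, f (w 0) = f (w k) := fun k => by
    induction k with
    | zero => rfl
    | succ k ih => rw [ih, hstep]
  have h0 : w 0 = u := by funext j; simp [w]
  have hn : w n = v := by funext j; simp [w]
  exact h (h0 ▸ hn ▸ hchain n)

def EssentiallyAbsorbs (S : Set X) {n : ℕ} (t : (Fin n → X) → X) : Prop :=
  ∀ i, DependsOnVar t i → ∀ x, x i ∈ S → t x ∈ S

lemma essentiallyAbsorbs_of_forall {S : Set X} {n : ℕ} {t : (Fin n → X) → X}
    (h : ∀ x, (∃ i, x i ∈ S) → t x ∈ S) : EssentiallyAbsorbs S t :=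
  fun i _ x hx => h x ⟨i, hx⟩

def absorbingClone (S : Set X) : Clone X where
  carrier _ := {t | EssentiallyAbsorbs S t}
  proj_mem _ i j hdep x hx := by
    obtain ⟨a, b, hab, hne⟩ := hdep
    obtain rfl : j = i := by_contra fun hji => hne (hab i (Ne.symm hji))
    exact hx
  comp_mem f g hf hg j hdep x hx := by
    obtain ⟨a, b, hab, hne⟩ := hdep
    obtain ⟨i, hgi, hfi⟩ := exists_dependsOnVar_of_ne f hne
    exact hf i hfi _ (hg i j ⟨a, b, hab, hgi⟩ x hx)

lemma Clone.cloneGen_le_s11 {F : ∀ n : ℕ, Set ((Fin (n + 1) → X) → X)} {C : Clone X}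
    (h : ∀ n, F n ⊆ C.carrier n) : Clone.cloneGen F ≤ C :=
  sInf_le h

end Absorbing

section Generators

variable {X : Type u} {P : Type v} {e0 e1 e2 e4 : X} {Af : P → Set X}

lemma phi_mem_pair_iff (hAf : ∀ p : P, Af p ⊆ Aset e0 e1 e2 e4)
    (h02 : e0 ≠ e2) (h04 : e0 ≠ e4) (h12 : e1 ≠ e2) (h14 : e1 ≠ e4) (p : P) (x : X) :
    phi e0 e1 e2 e4 Af p x ∈ ({e2, e4} : Set X) ↔ x ∉ Aset e0 e1 e2 e4 := by
  unfold phi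
  split_ifs with hp hA
  · simp [h12, h14, hAf p hp]
  · simp [h02, h04, hA]
  · simp [hA]
  · simp [hA]

lemma notMem_Aset_of_mem_pair {x : X} (hx : x ∈ ({e2, e4} : Set X)) :
    x ∉ Aset e0 e1 e2 e4 := by
  rcases hx with rfl | rfl <;> simp [Aset]

lemma mOp_mem_pair (hAf : ∀ p : P, Af p ⊆ Aset e0 e1 e2 e4)
    (h02 : e0 ≠ e2) (h04 : e0 ≠ e4) (h12 : e1 ≠ e2) (h14 : e1 ≠ e4) (p q1 q2 : P) {a b c : X}
    (h : a ∈ ({e2, e4} : Set X) ∨ b ∈ ({e2, e4} : Set X) ∨ c ∈ ({e2, e4} : Set X)) :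
    mOp e0 e1 e2 e4 Af p q1 q2 a b c ∈ ({e2, e4} : Set X) := by
  have hphi := phi_mem_pair_iff hAf h02 h04 h12 h14
  unfold mOp
  split_ifs with hbc
  · obtain ⟨rfl, rfl⟩ := hbc
    rw [hphi]
    rcases h with ha | hb | hc
    · exact notMem_Aset_of_mem_pair ha
    · exact (hphi q1 a).1 hb
    · exact (hphi q2 a).1 hc
  · exact Or.inl rfl
  · exact Or.inr rfl

lemma generators_subset_absorbingClone [SemilatticeSup P]
    (hAf : ∀ p : P, Af p ⊆ Aset e0 e1 e2 e4)
    (h02 : e0 ≠ e2) (h04 : e0 ≠ e4) (h12 : e1 ≠ e2) (h14 : e1 ≠ e4) (n : ℕ) :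
    PhiFam e0 e1 e2 e4 Af Set.univ n ∪ MFam e0 e1 e2 e4 Af n ⊆
      (absorbingClone {e2, e4}).carrier n := by
  rintro f (hf | hf)
  · rcases n with _ | n
    · obtain ⟨p, -, rfl⟩ := hf
      refine essentiallyAbsorbs_of_forall fun x ⟨i, hi⟩ => ?_
      rw [Fin.eq_zero i] at hi
      exact (phi_mem_pair_iff hAf h02 h04 h12 h14 p (x 0)).2 (notMem_Aset_of_mem_pair hi)
    · exact absurd hf (Set.notMem_empty f)
  · rcases n with _ | _ | _ | n
    · exact absurd hf (Set.notMem_empty f)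
    · exact absurd hf (Set.notMem_empty f)
    · obtain ⟨p, q1, q2, -, rfl⟩ := hf
      refine essentiallyAbsorbs_of_forall fun x ⟨i, hi⟩ =>
        mOp_mem_pair hAf h02 h04 h12 h14 _ _ _ ?_
      fin_cases i
      exacts [Or.inl hi, Or.inr (Or.inl hi), Or.inr (Or.inr hi)]
    · exact absurd hf (Set.notMem_empty f)

lemma CClone_le_absorbingClone [SemilatticeSup P] (hAf : ∀ p : P, Af p ⊆ Aset e0 e1 e2 e4)
    (h02 : e0 ≠ e2) (h04 : e0 ≠ e4) (h12 : e1 ≠ e2) (h14 : e1 ≠ e4) :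
    CClone e0 e1 e2 e4 Af ≤ absorbingClone {e2, e4} :=
  Clone.cloneGen_le_s11 (generators_subset_absorbingClone hAf h02 h04 h12 h14)

end Generators

theorem inserting_two_general
    {X : Type u} {P : Type v} [SemilatticeSup P]
    (e0 e1 e2 e4 : X)
    (hdist : e0 ≠ e1 ∧ e0 ≠ e2 ∧ e0 ≠ e4 ∧ e1 ≠ e2 ∧ e1 ≠ e4 ∧ e2 ≠ e4)
    (Af : P → Set X) (hAf : ∀ p : P, Af p ⊆ Aset e0 e1 e2 e4)
    (n : ℕ) (t : (Fin (n + 1) → X) → X)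
    (ht : t ∈ (CClone e0 e1 e2 e4 Af).carrier n)
    (hdep : DependsOnVar t 0)
    (x : Fin (n + 1) → X) (hx : x 0 = e2) :
    t x = e2 ∨ t x = e4 := by
  obtain ⟨-, h02, h04, h12, h14, -⟩ := hdist
  exact CClone_le_absorbingClone hAf h02 h04 h12 h14 n ht 0 hdep x (Or.inl hx)

/-- Lemma 5: an unspoilt member of `C` depending on its first variable takes only
values in `{2, 4}` when `2` is substituted for its first variable. -/
theorem inserting_two
    {X : Type u} {P : Type v} [Infinite X] [SemilatticeSup P]
    (e0 e1 e2 e4 : X)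
    (hdist : e0 ≠ e1 ∧ e0 ≠ e2 ∧ e0 ≠ e4 ∧ e1 ≠ e2 ∧ e1 ≠ e4 ∧ e2 ≠ e4)
    (hcard : Cardinal.lift.{u} (Cardinal.mk P) ≤ Cardinal.lift.{v} (2 ^ Cardinal.mk X))
    (Af : P → Set X) (hAf : ∀ p : P, Af p ⊆ Aset e0 e1 e2 e4)
    (hcover : ∀ (p : P) (k : ℕ) (q : Fin k → P),
      (∀ i, p ≠ q i) → ¬ Af p ⊆ ⋃ i, Af (q i))
    (n : ℕ) (t : (Fin (n + 1) → X) → X)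
    (ht : t ∈ (CClone e0 e1 e2 e4 Af).carrier n)
    (hunsp : Unspoilt e0 e1 e2 e4 Af t)
    (hdep : DependsOnVar t 0)
    (x : Fin (n + 1) → X) (hx : x 0 = e2) :
    t x = e2 ∨ t x = e4 :=
  inserting_two_general e0 e1 e2 e4 hdist Af hAf n t ht hdep x hx
end

section
/- Let r(x,y) be a reduced term representation of a binary function in C that is unspoilt and depends on both of its variables, and let a ∈ A. Then the function represented by r satisfies r(2,a) = 4 if and only if a ∈ ⋃{A_v : φ_v(y) ∈ Leaf(r)}. -/
universe u v

attribute [local instance] Classical.propDecidable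

/-- Terms over the function symbols `Φ ∪ M` in two variables `x, y`
(projections appear only as variables). -/
inductive CTerm (P : Type v) : Type v where
  | varx : CTerm P
  | vary : CTerm P
  | app1 : P → CTerm P → CTerm P
  | app3 : P → P → P → CTerm P → CTerm P → CTerm P → CTerm P

/-- Evaluation of a term at `(x, y)`: `app1 p` is interpreted as `φ_p` and
`app3 p q1 q2` as `m_p^(q1,q2)`. -/
noncomputable def CTerm.eval {X : Type u} {P : Type v} (e0 e1 e2 e4 : X)
    (Af : P → Set X) : CTerm P → X → X → X
  | .varx, x, _ => x
  | .vary, _, y => y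
  | .app1 p t, x, y => phi e0 e1 e2 e4 Af p (CTerm.eval e0 e1 e2 e4 Af t x y)
  | .app3 p q1 q2 t1 t2 t3, x, y =>
      mOp e0 e1 e2 e4 Af p q1 q2 (CTerm.eval e0 e1 e2 e4 Af t1 x y)
        (CTerm.eval e0 e1 e2 e4 Af t2 x y) (CTerm.eval e0 e1 e2 e4 Af t3 x y)

/-- A term is a term over `Φ ∪ M` iff every ternary symbol `m_p^(q1,q2)` in it
satisfies `p ≤ q1 ⊔ q2`. -/
def CTerm.Valid {P : Type v} [SemilatticeSup P] : CTerm P → Prop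
  | .varx => True
  | .vary => True
  | .app1 _ t => t.Valid
  | .app3 p q1 q2 t1 t2 t3 => p ≤ q1 ⊔ q2 ∧ t1.Valid ∧ t2.Valid ∧ t3.Valid

/-- The set of indices `v` such that `φ_v(y)` is a leaf of the term
(a leaf being a subterm with exactly one function symbol). -/
noncomputable def CTerm.leafPhiY {P : Type v} : CTerm P → Set P
  | .varx => ∅
  | .vary => ∅
  | .app1 p t => if t = CTerm.vary then {p} else t.leafPhiY
  | .app3 _ _ _ t1 t2 t3 => t1.leafPhiY ∪ t2.leafPhiY ∪ t3.leafPhiY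

/-- A term is reduced iff it has no subterm of the form
`m_p^(q1,q2)(v, φ_(q1)(v), φ_(q2)(v))` with `v` a variable. -/
def CTerm.Reduced {P : Type v} : CTerm P → Prop
  | .varx => True
  | .vary => True
  | .app1 _ t => t.Reduced
  | .app3 _ q1 q2 t1 t2 t3 =>
      (¬ ∃ v : CTerm P, (v = CTerm.varx ∨ v = CTerm.vary) ∧
          t1 = v ∧ t2 = CTerm.app1 q1 v ∧ t3 = CTerm.app1 q2 v) ∧
      t1.Reduced ∧ t2.Reduced ∧ t3.Reduced

/-!
Let `ts₀, ts₁` be unary members of `C` with `r(ts₀, ts₁) = φ_p`. Every operation of `C` returns,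
at each tuple, an entry of the tuple or one of `0, 1, 2, 4`, so each `tsᵢ` maps each point of `A`
to itself or out of `A`. Call a subterm `s` live for `c` if `s(ts₀, ts₁)` agrees with `φ_c` on `A`.
By induction, a reduced live subterm is `y`, or `φ_c(y)`, or has `s(2, a) = 4` when `a` lies in
the union of its `φ_v(y)`-leaves and `s(2, a) = 2` otherwise. Indeed `φ_c` takes only the values
`0, 1` on `A`, which forces the first clause of `m_p^{q₁,q₂}(s₁, s₂, s₃)`; then `s₁(ts₀, ts₁)` stays
in `A`, so `s₁` is a variable and `s₂, s₃` are live for `q₁, q₂`, and the value of `m` at `(2, a)`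
is computed directly. When `s₁ = y`, the first clause at `(2, a)` would need
`s₂ = φ_{q₁}(y), s₃ = φ_{q₂}(y)`, which reducedness forbids. Finally `r` depends on `x`, so it is
neither `y` nor `φ_p(y)`.
-/

def Clone.conservativeOn {X : Type u} (B : Set X) : Clone X where
  carrier _ := {f | ∀ x, f x ∈ Set.range x ∨ f x ∉ B}
  proj_mem _ i _ := .inl ⟨i, rfl⟩
  comp_mem f g hf hg x := by
    rcases hf fun i => g i x with ⟨i, hi⟩ | hfx
    · simp only [← hi]
      exact hg i x
    · exact .inr hfx

def CTerm.EvalTwoByLeaves {X : Type u} {P : Type v} (e0 e1 e2 e4 : X) (Af : P → Set X) (a : X)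
    (s : CTerm P) : Prop :=
  s.eval e0 e1 e2 e4 Af e2 a = if a ∈ ⋃ v ∈ s.leafPhiY, Af v then e4 else e2

theorem injective_of_not_subset_iUnion {X : Type u} {P : Type v} {Af : P → Set X}
    (hcover : ∀ (p : P) (k : ℕ) (q : Fin k → P), (∀ i, p ≠ q i) → ¬ Af p ⊆ ⋃ i, Af (q i)) :
    Function.Injective Af := fun p q hpq => by_contra fun hne =>
  hcover p 1 (fun _ => q) (fun _ => hne) fun _ hx => Set.mem_iUnion.2 ⟨0, hpq ▸ hx⟩

section

variable {X : Type u} {P : Type v} {e0 e1 e2 e4 : X} {Af : P → Set X}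

local notation "𝔸" => Aset e0 e1 e2 e4
local notation "φ" => phi e0 e1 e2 e4 Af
local notation "𝓛" s:max => ⋃ v ∈ CTerm.leafPhiY s, Af v
local notation "ByLeaves" => CTerm.EvalTwoByLeaves e0 e1 e2 e4 Af
local notation "Distinct₄" => e0 ≠ e1 ∧ e0 ≠ e2 ∧ e0 ≠ e4 ∧ e1 ≠ e2 ∧ e1 ≠ e4 ∧ e2 ≠ e4

theorem mem_Aset_iff {x : X} : x ∈ 𝔸 ↔ x ≠ e0 ∧ x ≠ e1 ∧ x ≠ e2 ∧ x ≠ e4 := by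
  simp [Aset]

theorem phi_not_mem_Aset_s12 (p : P) (x : X) : φ p x ∉ 𝔸 := by
  unfold phi
  split_ifs <;> simp [Aset]

theorem mOp_not_mem_Aset (p q1 q2 : P) (x y z : X) :
    mOp e0 e1 e2 e4 Af p q1 q2 x y z ∉ 𝔸 := by
  unfold mOp
  split_ifs
  · exact phi_not_mem_Aset_s12 p x
  all_goals simp [Aset]

theorem phi_of_mem_Aset {x : X} (hx : x ∈ 𝔸) (p : P) :
    φ p x = if x ∈ Af p then e1 else e0 := by
  simp [phi, hx]

theorem phi_of_not_mem_Aset (hAf : ∀ p, Af p ⊆ 𝔸) {x : X} (hx : x ∉ 𝔸) (p : P) :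
    φ p x = e2 ∨ φ p x = e4 := by
  rw [phi, if_neg (mt (@hAf p x) hx), if_neg hx]
  split_ifs <;> simp

theorem phi_two (hAf : ∀ p, Af p ⊆ 𝔸) (p : P) : φ p e2 = e2 := by
  have h2 : e2 ∉ 𝔸 := by simp [Aset]
  rw [phi, if_neg (mt (@hAf p e2) h2), if_neg h2, if_pos rfl]

theorem CClone_le_conservativeOn [SemilatticeSup P] :
    CClone e0 e1 e2 e4 Af ≤ Clone.conservativeOn 𝔸 := by
  refine sInf_le (fun n f hf => ?_)
  rcases hf with hf | hf
  · match n, f, hf with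
    | 0, _, ⟨p, _, rfl⟩ => exact fun x => .inr (phi_not_mem_Aset_s12 p (x 0))
  · match n, f, hf with
    | 2, _, ⟨p, q1, q2, _, rfl⟩ => exact fun x => .inr (mOp_not_mem_Aset p q1 q2 _ _ _)

theorem phi_eq_one_iff (h01 : e0 ≠ e1) {x : X} (hx : x ∈ 𝔸) (p : P) :
    φ p x = e1 ↔ x ∈ Af p := by
  rw [phi_of_mem_Aset hx]
  split_ifs with h <;> simp [h, h01]

theorem eq_of_eqOn_phi (h01 : e0 ≠ e1) (hAf : ∀ p, Af p ⊆ 𝔸) (hinj : Function.Injective Af)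
    {q c : P} (h : Set.EqOn (φ q) (φ c) 𝔸) : q = c :=
  hinj <| Set.ext fun w => by
    by_cases hw : w ∈ 𝔸
    · rw [← phi_eq_one_iff h01 hw, h hw, phi_eq_one_iff h01 hw]
    · exact iff_of_false (mt (@hAf q w) hw) (mt (@hAf c w) hw)

theorem phi_ne_two_and_ne_four (hd : Distinct₄) {w : X} (hw : w ∈ 𝔸) (c : P) :
    φ c w ≠ e2 ∧ φ c w ≠ e4 := by
  obtain ⟨-, h02, h04, h12, h14, -⟩ := hd
  rw [phi_of_mem_Aset hw]
  split_ifs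
  exacts [⟨h12, h14⟩, ⟨h02, h04⟩]

theorem mem_Aset_of_phi_eq_phi (hd : Distinct₄) (hAf : ∀ p, Af p ⊆ 𝔸) {w x : X} (hw : w ∈ 𝔸)
    {q c : P} (h : φ q x = φ c w) : x ∈ 𝔸 := by
  by_contra hx
  have hc := phi_ne_two_and_ne_four (Af := Af) hd hw c
  rcases phi_of_not_mem_Aset hAf hx q with hq | hq <;> rw [hq] at h
  exacts [hc.1 h.symm, hc.2 h.symm]

theorem eq_phi_of_mOp_eq_phi (hd : Distinct₄) {w x y z : X} (hw : w ∈ 𝔸) {p q1 q2 c : P}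
    (h : mOp e0 e1 e2 e4 Af p q1 q2 x y z = φ c w) :
    y = φ q1 x ∧ z = φ q2 x ∧ φ p x = φ c w := by
  have hc := phi_ne_two_and_ne_four (Af := Af) hd hw c
  unfold mOp at h
  split_ifs at h with hyz
  exacts [⟨hyz.1, hyz.2, h⟩, absurd h.symm hc.1, absurd h.symm hc.2]

theorem mOp_two (hd : Distinct₄) (hAf : ∀ p, Af p ⊆ 𝔸) (p q1 q2 : P) (y z : X) :
    mOp e0 e1 e2 e4 Af p q1 q2 e2 y z =
      if (y = e1 ∨ y = e4) ∨ (z = e1 ∨ z = e4) then e4 else e2 := by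
  obtain ⟨-, -, -, h12, -, h24⟩ := hd
  simp only [mOp, phi_two hAf]
  split_ifs <;> grind

theorem CTerm.eq_var_of_eval_mem_Aset {s : CTerm P} {x y : X}
    (h : s.eval e0 e1 e2 e4 Af x y ∈ 𝔸) : s = .varx ∨ s = .vary := by
  cases s with
  | varx => exact .inl rfl
  | vary => exact .inr rfl
  | app1 p t => exact (phi_not_mem_Aset_s12 _ _ h).elim
  | app3 p q1 q2 t1 t2 t3 => exact (mOp_not_mem_Aset _ _ _ _ _ _ h).elim

theorem CTerm.eval_subst_eq_self {s1 s2 : X → X} (hs1 : ∀ w, s1 w = w ∨ s1 w ∉ 𝔸)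
    (hs2 : ∀ w, s2 w = w ∨ s2 w ∉ 𝔸) {a : X} (ha : a ∈ 𝔸) {s : CTerm P}
    (h : ∀ w ∈ 𝔸, s.eval e0 e1 e2 e4 Af (s1 w) (s2 w) ∈ 𝔸) :
    (s = .varx ∨ s = .vary) ∧ ∀ w ∈ 𝔸, s.eval e0 e1 e2 e4 Af (s1 w) (s2 w) = w := by
  obtain rfl | rfl := eq_var_of_eval_mem_Aset (h a ha)
  · exact ⟨.inl rfl, fun w hw => (hs1 w).resolve_right (not_not.2 (h w hw))⟩
  · exact ⟨.inr rfl, fun w hw => (hs2 w).resolve_right (not_not.2 (h w hw))⟩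

theorem CTerm.eval_two_eq_one_or_four_iff (hd : Distinct₄) {a : X} (ha : a ∈ 𝔸)
    {s : CTerm P} {c : P} (hs : s = .vary ∨ s = .app1 c .vary ∨ ByLeaves a s) :
    (s.eval e0 e1 e2 e4 Af e2 a = e1 ∨ s.eval e0 e1 e2 e4 Af e2 a = e4) ↔ a ∈ 𝓛 s := by
  obtain ⟨-, ha1, -, ha4⟩ := mem_Aset_iff.1 ha
  rcases hs with rfl | rfl | hs
  · simp [CTerm.eval, CTerm.leafPhiY, ha1, ha4]
  · simp [CTerm.eval, CTerm.leafPhiY, phi_eq_one_iff hd.1 ha, (phi_ne_two_and_ne_four hd ha c).2]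
  · rw [hs]
    split_ifs <;> simp [*, hd.2.2.2.1.symm]

theorem CTerm.app1_eq_or_evalTwoByLeaves
    (hd : Distinct₄) (hAf : ∀ p, Af p ⊆ 𝔸) (hinj : Function.Injective Af) {s1 s2 : X → X}
    (hs1 : ∀ w, s1 w = w ∨ s1 w ∉ 𝔸) (hs2 : ∀ w, s2 w = w ∨ s2 w ∉ 𝔸) {a : X} (ha : a ∈ 𝔸)
    {q c : P} {t : CTerm P}
    (h : ∀ w ∈ 𝔸, φ q (t.eval e0 e1 e2 e4 Af (s1 w) (s2 w)) = φ c w) :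
    app1 q t = app1 c vary ∨ ByLeaves a (app1 q t) := by
  obtain ⟨rfl | rfl, ht⟩ :=
    eval_subst_eq_self hs1 hs2 ha fun w hw => mem_Aset_of_phi_eq_phi hd hAf hw (h w hw)
  · right
    simp [EvalTwoByLeaves, CTerm.eval, CTerm.leafPhiY, phi_two hAf]
  · left
    have hqc : q = c := eq_of_eqOn_phi hd.1 hAf hinj fun w hw => by rw [← h w hw, ht w hw]
    rw [hqc]

theorem CTerm.evalTwoByLeaves_app3_varx
    (hd : Distinct₄) (hAf : ∀ p, Af p ⊆ 𝔸) {a : X} (ha : a ∈ 𝔸) {p q1 q2 : P} {t2 t3 : CTerm P}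
    (h2 : t2 = vary ∨ t2 = app1 q1 vary ∨ ByLeaves a t2)
    (h3 : t3 = vary ∨ t3 = app1 q2 vary ∨ ByLeaves a t3) :
    ByLeaves a (app3 p q1 q2 varx t2 t3) := by
  have hL : 𝓛 (app3 p q1 q2 varx t2 t3) = 𝓛 t2 ∪ 𝓛 t3 := by
    rw [CTerm.leafPhiY, CTerm.leafPhiY, Set.empty_union, Set.biUnion_union]
  rw [EvalTwoByLeaves, hL, Set.mem_union, ← eval_two_eq_one_or_four_iff hd ha h2,
    ← eval_two_eq_one_or_four_iff hd ha h3]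
  exact (mOp_two hd hAf ..).trans (by congr)

theorem CTerm.evalTwoByLeaves_app3_vary
    (hd : Distinct₄) {a : X} (ha : a ∈ 𝔸) {p q1 q2 : P} {t2 t3 : CTerm P}
    (h2 : t2 = app1 q1 vary ∨ ByLeaves a t2) (h3 : t3 = app1 q2 vary ∨ ByLeaves a t3)
    (hred : ¬(t2 = app1 q1 vary ∧ t3 = app1 q2 vary)) :
    ByLeaves a (app3 p q1 q2 vary t2 t3) := by
  have hL : 𝓛 (app3 p q1 q2 vary t2 t3) = 𝓛 t2 ∪ 𝓛 t3 := by
    rw [CTerm.leafPhiY, CTerm.leafPhiY, Set.empty_union, Set.biUnion_union]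
  have h14₂ := eval_two_eq_one_or_four_iff hd ha (.inr h2)
  have h14₃ := eval_two_eq_one_or_four_iff hd ha (.inr h3)
  have hphi : ∀ {t : CTerm P} {q : P}, (t = app1 q vary ∨ ByLeaves a t) →
      t.eval e0 e1 e2 e4 Af e2 a = φ q a → t = app1 q vary := by
    intro t q ht he
    refine ht.resolve_right fun hb => ?_
    have hq := phi_ne_two_and_ne_four (Af := Af) hd ha q
    rw [hb] at he
    split_ifs at he
    exacts [hq.2 he.symm, hq.1 he.symm]
  have hfirst : ¬(t2.eval e0 e1 e2 e4 Af e2 a = φ q1 a ∧ t3.eval e0 e1 e2 e4 Af e2 a = φ q2 a) :=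
    fun ⟨he2, he3⟩ => hred ⟨hphi h2 he2, hphi h3 he3⟩
  have htwo : a ∉ 𝓛 t2 → a ∉ 𝓛 t3 →
      t2.eval e0 e1 e2 e4 Af e2 a = e2 ∨ t3.eval e0 e1 e2 e4 Af e2 a = e2 := by
    intro n2 n3
    by_cases ht2 : t2 = app1 q1 vary
    · have h3' := h3.resolve_left fun ht3 => hred ⟨ht2, ht3⟩
      rw [EvalTwoByLeaves, if_neg n3] at h3'
      exact .inr h3'
    · have h2' := h2.resolve_left ht2
      rw [EvalTwoByLeaves, if_neg n2] at h2'
      exact .inl h2'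
  rw [EvalTwoByLeaves, hL, Set.mem_union]
  change mOp e0 e1 e2 e4 Af p q1 q2 a _ _ = _
  rw [mOp, if_neg hfirst]
  split_ifs <;> grind

theorem CTerm.eq_vary_or_eq_app1_or_evalTwoByLeaves
    (hd : Distinct₄) (hAf : ∀ p, Af p ⊆ 𝔸) (hinj : Function.Injective Af) {s1 s2 : X → X}
    (hs1 : ∀ w, s1 w = w ∨ s1 w ∉ 𝔸) (hs2 : ∀ w, s2 w = w ∨ s2 w ∉ 𝔸) {a : X} (ha : a ∈ 𝔸)
    (s : CTerm P) (hs : s.Reduced) {c : P}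
    (h : ∀ w ∈ 𝔸, s.eval e0 e1 e2 e4 Af (s1 w) (s2 w) = φ c w) :
    s = vary ∨ s = app1 c vary ∨ ByLeaves a s := by
  induction s generalizing c with
  | varx => exact .inr (.inr (by simp [EvalTwoByLeaves, CTerm.eval, CTerm.leafPhiY]))
  | vary => exact .inl rfl
  | app1 q t => exact .inr (app1_eq_or_evalTwoByLeaves hd hAf hinj hs1 hs2 ha h)
  | app3 p q1 q2 t1 t2 t3 _ ih2 ih3 =>
    obtain ⟨hred, -, hr2, hr3⟩ := hs
    have hm := fun w hw => eq_phi_of_mOp_eq_phi hd hw (h w hw)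
    obtain ⟨hvar, ht1⟩ := eval_subst_eq_self hs1 hs2 ha fun w hw =>
      mem_Aset_of_phi_eq_phi hd hAf hw (hm w hw).2.2
    have live2 : ∀ w ∈ 𝔸, t2.eval e0 e1 e2 e4 Af (s1 w) (s2 w) = φ q1 w := fun w hw => by
      rw [(hm w hw).1, ht1 w hw]
    have live3 : ∀ w ∈ 𝔸, t3.eval e0 e1 e2 e4 Af (s1 w) (s2 w) = φ q2 w := fun w hw => by
      rw [(hm w hw).2.1, ht1 w hw]
    refine .inr (.inr ?_)
    rcases hvar with rfl | rfl
    · exact evalTwoByLeaves_app3_varx hd hAf ha (ih2 hr2 live2) (ih3 hr3 live3)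
    · have hne : ∀ {t : CTerm P} {q : P},
          (∀ w ∈ 𝔸, t.eval e0 e1 e2 e4 Af (s1 w) (s2 w) = φ q w) → t ≠ vary := by
        rintro t q ht rfl
        have hqa : φ q a ∈ 𝔸 := by rw [← ht a ha, ht1 a ha]; exact ha
        exact phi_not_mem_Aset_s12 q a hqa
      exact evalTwoByLeaves_app3_vary hd ha ((ih2 hr2 live2).resolve_left (hne live2))
        ((ih3 hr3 live3).resolve_left (hne live3))
        fun ⟨h2, h3⟩ => hred ⟨vary, .inr rfl, rfl, h2, h3⟩

end

theorem eval_at_two_eq_four_iff_general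
    {X : Type u} {P : Type v} [SemilatticeSup P]
    (e0 e1 e2 e4 : X)
    (hdist : e0 ≠ e1 ∧ e0 ≠ e2 ∧ e0 ≠ e4 ∧ e1 ≠ e2 ∧ e1 ≠ e4 ∧ e2 ≠ e4)
    (Af : P → Set X) (hAf : ∀ p : P, Af p ⊆ Aset e0 e1 e2 e4)
    (hcover : ∀ (p : P) (k : ℕ) (q : Fin k → P),
      (∀ i, p ≠ q i) → ¬ Af p ⊆ ⋃ i, Af (q i))
    (r : CTerm P) (hred : r.Reduced)
    (t : (Fin 2 → X) → X)
    (htr : t = fun v : Fin 2 → X => r.eval e0 e1 e2 e4 Af (v 0) (v 1))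
    (hunsp : Unspoilt e0 e1 e2 e4 Af t)
    (hdep0 : DependsOnVar t 0)
    (a : X) (ha : a ∈ Aset e0 e1 e2 e4) :
    r.eval e0 e1 e2 e4 Af e2 a = e4 ↔ a ∈ ⋃ v ∈ r.leafPhiY, Af v := by
  subst htr
  obtain ⟨ts, hts, p, -, hp⟩ := hunsp
  have hs (i : Fin 2) (w : X) : ts i (fun _ => w) = w ∨ ts i (fun _ => w) ∉ Aset e0 e1 e2 e4 :=
    (CClone_le_conservativeOn 0 (hts i) fun _ => w).imp (fun ⟨_, h⟩ => h.symm) id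
  have hrp (w : X) (_ : w ∈ Aset e0 e1 e2 e4) :
      r.eval e0 e1 e2 e4 Af (ts 0 fun _ => w) (ts 1 fun _ => w) = phi e0 e1 e2 e4 Af p w :=
    congrFun hp fun _ => w
  obtain ⟨α, β, hαβ, hne⟩ := hdep0
  rcases r.eq_vary_or_eq_app1_or_evalTwoByLeaves hdist hAf (injective_of_not_subset_iUnion hcover)
    (hs 0) (hs 1) ha hred hrp with rfl | rfl | hr
  · exact absurd (hαβ 1 (by decide)) hne
  · exact absurd (congrArg (phi e0 e1 e2 e4 Af p) (hαβ 1 (by decide))) hne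
  · rw [hr]
    split_ifs with h
    · exact iff_of_true rfl h
    · exact iff_of_false hdist.2.2.2.2.2 h

/-- Lemma 6: if `r(x,y)` is a reduced term representation of an unspoilt binary
function in `C` depending on both of its variables, then for `a ∈ A` we have
`r(2,a) = 4` iff `a ∈ ⋃ (A_v : φ_v(y) ∈ Leaf(r))`. -/
theorem eval_at_two_eq_four_iff
    {X : Type u} {P : Type v} [Infinite X] [SemilatticeSup P]
    (e0 e1 e2 e4 : X)
    (hdist : e0 ≠ e1 ∧ e0 ≠ e2 ∧ e0 ≠ e4 ∧ e1 ≠ e2 ∧ e1 ≠ e4 ∧ e2 ≠ e4)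
    (hcard : Cardinal.lift.{u} (Cardinal.mk P) ≤ Cardinal.lift.{v} (2 ^ Cardinal.mk X))
    (Af : P → Set X) (hAf : ∀ p : P, Af p ⊆ Aset e0 e1 e2 e4)
    (hcover : ∀ (p : P) (k : ℕ) (q : Fin k → P),
      (∀ i, p ≠ q i) → ¬ Af p ⊆ ⋃ i, Af (q i))
    (r : CTerm P) (hvalid : r.Valid) (hred : r.Reduced)
    (t : (Fin 2 → X) → X)
    (htr : t = fun v : Fin 2 → X => r.eval e0 e1 e2 e4 Af (v 0) (v 1))
    (ht : t ∈ (CClone e0 e1 e2 e4 Af).carrier 1)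
    (hunsp : Unspoilt e0 e1 e2 e4 Af t)
    (hdep0 : DependsOnVar t 0) (hdep1 : DependsOnVar t 1)
    (a : X) (ha : a ∈ Aset e0 e1 e2 e4) :
    r.eval e0 e1 e2 e4 Af e2 a = e4 ↔ a ∈ ⋃ v ∈ r.leafPhiY, Af v :=
  eval_at_two_eq_four_iff_general e0 e1 e2 e4 hdist Af hAf hcover r hred t htr hunsp hdep0 a ha
end
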